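/- arXiv:2508.14372 — 2 statements merged into one kernel-verified Lean document; each statement's English description precedes it below -/
import Mathlib

section
/- Let A be a Dehn-Sommerville p-sphere and B a Dehn-Sommerville q-sphere on disjoint vertex sets, where p, q ≥ −1. Then the join A ⊕ B is a Dehn-Sommerville (p+q+1)-sphere. -/
open Finset

/-- A finite abstract simplicial complex: a finite set of nonempty finite sets
closed under taking nonempty subsets. -/
def IsComplex {α : Type*} (G : Finset (Finset α)) : Prop :=
  ∀ x ∈ G, x ≠ ∅ ∧ ∀ y ⊆ x, y ≠ ∅ → y ∈ G

/-- The star U(x) = {y ∈ G : x ⊆ y}. -/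
def starOf {α : Type*} [DecidableEq α] (G : Finset (Finset α)) (x : Finset α) :
    Finset (Finset α) :=
  G.filter fun y => x ⊆ y

/-- The closed ball B(x): all (nonempty) simplices contained in some member of U(x). -/
def ballOf {α : Type*} [DecidableEq α] (G : Finset (Finset α)) (x : Finset α) :
    Finset (Finset α) :=
  G.filter fun z => ∃ y ∈ G, x ⊆ y ∧ z ⊆ y

/-- The unit sphere S(x) = B(x) \ U(x). -/
def sphereOf {α : Type*} [DecidableEq α] (G : Finset (Finset α)) (x : Finset α) :
    Finset (Finset α) :=
  ballOf G x \ starOf G x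

/-- Maximal dimension of a complex; the empty complex has dimension -1. -/
def dimC {α : Type*} (G : Finset (Finset α)) : ℤ := ((G.sup Finset.card : ℕ) : ℤ) - 1

/-- Euler characteristic χ(A) = Σ_{x∈A} (−1)^{|x|−1}. -/
def chi {α : Type*} (A : Finset (Finset α)) : ℤ := ∑ x ∈ A, (-1 : ℤ) ^ (x.card - 1)

/-- The set of vertices of a complex (elements occurring in some simplex). -/
def vertexSet {α : Type*} [DecidableEq α] (G : Finset (Finset α)) : Finset α := G.sup id

/-- Dehn-Sommerville spheres, defined inductively: the empty complex is the
Dehn-Sommerville (−1)-sphere, and a complex of maximal dimension q ≥ 0 is a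
Dehn-Sommerville q-sphere if all unit spheres are Dehn-Sommerville (q−1)-spheres
and χ(G) = 1 + (−1)^q. -/
inductive IsDSSphere {α : Type*} [DecidableEq α] : ℤ → Finset (Finset α) → Prop
  | empty : IsDSSphere (-1) (∅ : Finset (Finset α))
  | step (q : ℕ) (G : Finset (Finset α)) (hC : IsComplex G) (hq : dimC G = q)
      (hS : ∀ x ∈ G, IsDSSphere ((q : ℤ) - 1) (sphereOf G x))
      (hχ : chi G = 1 + (-1) ^ q) : IsDSSphere q G

/-- A Dehn-Sommerville q-manifold: a complex of maximal dimension q all of whose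
unit spheres are Dehn-Sommerville (q−1)-spheres. -/
def IsDSManifold {α : Type*} [DecidableEq α] (q : ℤ) (G : Finset (Finset α)) : Prop :=
  IsComplex G ∧ dimC G = q ∧ ∀ x ∈ G, IsDSSphere (q - 1) (sphereOf G x)

/-- The join A ⊕ B = A ∪ B ∪ {a ∪ b : a ∈ A, b ∈ B}. -/
def joinC {α : Type*} [DecidableEq α] (A B : Finset (Finset α)) : Finset (Finset α) :=
  A ∪ B ∪ (A ×ˢ B).image fun p => p.1 ∪ p.2

/-!
The unit sphere of a simplex `x` in a complex `G` is the join `∂x ⊕ lk x` of the boundary of `x`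
with its link. In `A ⊕ B` every simplex is `a ∪ b` with `a`, `b` simplices of `A`, `B` or empty,
and its link is `lk a ⊕ lk b`; the link of `a` in a Dehn-Sommerville `p`-sphere is a
Dehn-Sommerville `(p - |a|)`-sphere, because the link of a vertex is its unit sphere. Hence every
unit sphere of `A ⊕ B` is an iterated join of lower-dimensional spheres and simplex boundaries,
and the unit spheres of `∂x` are the joins `∂y ⊕ ∂(x \ y)`. An induction on dimension that treats
joins and simplex boundaries simultaneously then leaves only the Euler characteristic, which
follows from `1 - χ(A ⊕ B) = (1 - χ A) (1 - χ B)`.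
-/

section Complexes

variable {α : Type*} {G : Finset (Finset α)} {x y : Finset α}

lemma IsComplex.ne_empty (hG : IsComplex G) (hx : x ∈ G) : x ≠ ∅ := (hG x hx).1

lemma IsComplex.empty_notMem (hG : IsComplex G) : ∅ ∉ G := fun h => hG.ne_empty h rfl

lemma IsComplex.mem_of_subset (hG : IsComplex G) (hx : x ∈ G) (hyx : y ⊆ x) (hy : y ≠ ∅) :
    y ∈ G :=
  (hG x hx).2 y hyx hy

lemma neg_one_le_dimC : -1 ≤ dimC G := by
  unfold dimC
  omega

variable [DecidableEq α]

/- `insert ∅ G` is the complex `G` augmented by the empty simplex; joins, links and Euler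
characteristics are cleanest at that level. -/

lemma IsComplex.mem_insert_empty_of_subset (hG : IsComplex G) (hx : x ∈ insert ∅ G)
    (hyx : y ⊆ x) : y ∈ insert ∅ G := by
  rcases eq_or_ne y ∅ with rfl | hy
  · exact mem_insert_self _ _
  have hx0 : x ≠ ∅ := fun h => hy (subset_empty.mp (h ▸ hyx))
  exact mem_insert_of_mem (hG.mem_of_subset (mem_of_mem_insert_of_ne hx hx0) hyx hy)

lemma subset_vertexSet (hx : x ∈ insert ∅ G) : x ⊆ vertexSet G := by
  rcases mem_insert.mp hx with rfl | hx
  · exact empty_subset _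
  · exact le_sup (f := id) hx

lemma vertexSet_mono {H : Finset (Finset α)} (h : G ⊆ H) : vertexSet G ⊆ vertexSet H :=
  sup_mono h

lemma card_le_dimC_add_one (hx : x ∈ insert ∅ G) : (x.card : ℤ) ≤ dimC G + 1 := by
  have : x.card ≤ (insert ∅ G).sup card := le_sup hx
  rw [sup_insert, card_empty] at this
  unfold dimC
  omega

lemma one_sub_chi (hG : ∅ ∉ G) : 1 - chi G = ∑ x ∈ insert ∅ G, (-1 : ℤ) ^ x.card := by
  rw [sum_insert hG, card_empty, pow_zero, chi, sub_eq_add_neg, ← sum_neg_distrib]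
  congr 1
  refine sum_congr rfl fun x hx => ?_
  obtain ⟨n, hn⟩ := Nat.exists_eq_add_one.mpr
    (card_pos.mpr (nonempty_iff_ne_empty.mpr (ne_of_mem_of_not_mem hx hG)))
  rw [hn, Nat.add_sub_cancel, pow_succ]
  ring

end Complexes

section Join

variable {α : Type*} [DecidableEq α] {A B : Finset (Finset α)}

lemma joinC_empty_left (B : Finset (Finset α)) : joinC ∅ B = B := by
  simp [joinC]

lemma insert_empty_joinC (A B : Finset (Finset α)) :
    insert ∅ (joinC A B) = (insert ∅ A ×ˢ insert ∅ B).image fun p => p.1 ∪ p.2 := by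
  ext z
  simp only [joinC, mem_insert, mem_union, mem_image, mem_product, Prod.exists]
  constructor
  · rintro (rfl | (hz | hz) | ⟨a, b, hab, rfl⟩)
    · exact ⟨∅, ∅, by simp⟩
    · exact ⟨z, ∅, by simp [hz]⟩
    · exact ⟨∅, z, by simp [hz]⟩
    · exact ⟨a, b, by simp [hab]⟩
  · rintro ⟨a, b, ⟨rfl | ha, rfl | hb⟩, rfl⟩
    · simp
    · simp [hb]
    · simp [ha]
    · exact Or.inr (Or.inr ⟨a, b, ⟨ha, hb⟩, rfl⟩)

lemma mem_insert_empty_joinC {z : Finset α} :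
    z ∈ insert ∅ (joinC A B) ↔ ∃ a ∈ insert ∅ A, ∃ b ∈ insert ∅ B, a ∪ b = z := by
  simp [insert_empty_joinC, and_assoc]

lemma union_mem_insert_empty_joinC {a b : Finset α} (ha : a ∈ insert ∅ A) (hb : b ∈ insert ∅ B) :
    a ∪ b ∈ insert ∅ (joinC A B) :=
  mem_insert_empty_joinC.mpr ⟨a, ha, b, hb, rfl⟩

lemma empty_notMem_joinC (hA : ∅ ∉ A) (hB : ∅ ∉ B) : ∅ ∉ joinC A B := by
  simp [joinC, hA, hB]

lemma isComplex_joinC (hA : IsComplex A) (hB : IsComplex B) : IsComplex (joinC A B) := by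
  intro z hz
  obtain ⟨a, ha, b, hb, rfl⟩ := mem_insert_empty_joinC.mp (mem_insert_of_mem hz)
  refine ⟨fun h => empty_notMem_joinC hA.empty_notMem hB.empty_notMem (h ▸ hz), fun y hy hy0 => ?_⟩
  have hsplit : y ∩ a ∪ y ∩ b = y := by rw [← inter_union_distrib_left, inter_eq_left.mpr hy]
  have := union_mem_insert_empty_joinC
    (hA.mem_insert_empty_of_subset ha (inter_subset_right : y ∩ a ⊆ a))
    (hB.mem_insert_empty_of_subset hb (inter_subset_right : y ∩ b ⊆ b))
  exact mem_of_mem_insert_of_ne (hsplit ▸ this) hy0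

lemma union_inter_eq_left {a b S : Finset α} (ha : a ⊆ S) (hb : Disjoint b S) :
    (a ∪ b) ∩ S = a := by
  rw [union_inter_distrib_right, inter_eq_left.mpr ha, disjoint_iff_inter_eq_empty.mp hb,
    union_empty]

section Disjoint

variable (hd : Disjoint (vertexSet A) (vertexSet B))
include hd

lemma disjoint_of_mem_insert_empty {a b : Finset α} (ha : a ∈ insert ∅ A) (hb : b ∈ insert ∅ B) :
    Disjoint a b :=
  hd.mono (subset_vertexSet ha) (subset_vertexSet hb)

lemma union_inter_vertexSet {a b : Finset α} (ha : a ⊆ vertexSet A) (hb : b ⊆ vertexSet B) :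
    ((a ∪ b) ∩ vertexSet A, (a ∪ b) ∩ vertexSet B) = (a, b) := by
  rw [union_inter_eq_left ha (hd.symm.mono_left hb), union_comm,
    union_inter_eq_left hb (hd.mono_left ha)]

lemma union_mem_insert_empty_joinC_iff {a b : Finset α} (ha : a ⊆ vertexSet A)
    (hb : b ⊆ vertexSet B) :
    a ∪ b ∈ insert ∅ (joinC A B) ↔ a ∈ insert ∅ A ∧ b ∈ insert ∅ B := by
  refine ⟨fun h => ?_, fun h => union_mem_insert_empty_joinC h.1 h.2⟩
  obtain ⟨a', ha', b', hb', hab⟩ := mem_insert_empty_joinC.mp h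
  have := union_inter_vertexSet hd (subset_vertexSet ha') (subset_vertexSet hb')
  rw [hab, union_inter_vertexSet hd ha hb, Prod.mk.injEq] at this
  rw [this.1, this.2]
  exact ⟨ha', hb'⟩

lemma dimC_joinC : dimC (joinC A B) = dimC A + dimC B + 1 := by
  have hsup : ∀ G : Finset (Finset α), G.sup card = (insert ∅ G).sup card := by
    simp [sup_insert]
  suffices (joinC A B).sup card = A.sup card + B.sup card by
    unfold dimC
    omega
  rw [hsup (joinC A B), hsup A, hsup B]
  apply le_antisymm
  · refine Finset.sup_le fun z hz => ?_
    obtain ⟨a, ha, b, hb, rfl⟩ := mem_insert_empty_joinC.mp hz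
    exact (card_union_le a b).trans (add_le_add (le_sup ha) (le_sup hb))
  · obtain ⟨a, ha, hmaxA⟩ := exists_mem_eq_sup (insert ∅ A) (insert_nonempty _ _) card
    obtain ⟨b, hb, hmaxB⟩ := exists_mem_eq_sup (insert ∅ B) (insert_nonempty _ _) card
    rw [hmaxA, hmaxB, ← card_union_of_disjoint (disjoint_of_mem_insert_empty hd ha hb)]
    exact le_sup (union_mem_insert_empty_joinC ha hb)

lemma one_sub_chi_joinC (hA : IsComplex A) (hB : IsComplex B) :
    1 - chi (joinC A B) = (1 - chi A) * (1 - chi B) := by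
  have hinj : Set.InjOn (fun p : Finset α × Finset α => p.1 ∪ p.2) ↑(insert ∅ A ×ˢ insert ∅ B) :=
    Set.LeftInvOn.injOn (f₁' := fun z => (z ∩ vertexSet A, z ∩ vertexSet B)) fun p hp =>
      union_inter_vertexSet hd (subset_vertexSet (mem_product.mp hp).1)
        (subset_vertexSet (mem_product.mp hp).2)
  rw [one_sub_chi (isComplex_joinC hA hB).empty_notMem, one_sub_chi hA.empty_notMem,
    one_sub_chi hB.empty_notMem, insert_empty_joinC, sum_image hinj, sum_product, sum_mul_sum]
  refine sum_congr rfl fun a ha => sum_congr rfl fun b hb => ?_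
  rw [card_union_of_disjoint (disjoint_of_mem_insert_empty hd ha hb), pow_add]

end Disjoint

end Join

section Link

variable {α : Type*} [DecidableEq α] {G : Finset (Finset α)} {x y z : Finset α}

def link (G : Finset (Finset α)) (x : Finset α) : Finset (Finset α) :=
  G.filter fun z => Disjoint z x ∧ z ∪ x ∈ G

def simplexBoundary (x : Finset α) : Finset (Finset α) :=
  x.ssubsets.erase ∅

lemma mem_link : z ∈ link G x ↔ z ∈ G ∧ Disjoint z x ∧ z ∪ x ∈ G :=
  mem_filter

lemma link_subset : link G x ⊆ G :=
  filter_subset _ _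

@[simp]
lemma link_empty : link G ∅ = G := by
  ext z
  simp [mem_link]

lemma disjoint_vertexSet_link : Disjoint (vertexSet (link G x)) x :=
  Finset.disjoint_sup_left.mpr fun _ hz => (mem_link.mp hz).2.1

lemma mem_insert_empty_link (hx : x ∈ insert ∅ G) :
    z ∈ insert ∅ (link G x) ↔ z ∈ insert ∅ G ∧ Disjoint z x ∧ z ∪ x ∈ insert ∅ G := by
  rcases eq_or_ne z ∅ with rfl | hz
  · simpa using hx
  · simp [hz, mem_link]

lemma link_insert (hG : IsComplex G) {u : α} (hu : u ∉ y) :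
    link G (insert u y) = link (link G {u}) y := by
  ext z
  have hunion : z ∪ y ∪ {u} = z ∪ insert u y := by
    rw [union_assoc, union_comm y, ← insert_eq]
  simp only [mem_link, disjoint_insert_right, disjoint_singleton_right, hunion]
  constructor
  · rintro ⟨hz, ⟨huz, hzy⟩, hzuy⟩
    have hz0 := hG.ne_empty hz
    refine ⟨⟨hz, huz, ?_⟩, hzy, ?_, fun h => (mem_union.mp h).elim huz hu, hzuy⟩
    · exact hG.mem_of_subset hzuy
        (union_subset_union_right (singleton_subset_iff.mpr (mem_insert_self u y))) (by simp)
    · exact hG.mem_of_subset hzuy (union_subset_union_right (subset_insert u y))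
        (fun h => hz0 (union_eq_empty.mp h).1)
  · rintro ⟨⟨hz, huz, -⟩, hzy, -, -, hzuy⟩
    exact ⟨hz, ⟨huz, hzy⟩, hzuy⟩

lemma mem_simplexBoundary : y ∈ simplexBoundary x ↔ y ≠ ∅ ∧ y ⊂ x := by
  simp [simplexBoundary]

lemma isComplex_simplexBoundary (x : Finset α) : IsComplex (simplexBoundary x) := by
  intro y hy
  obtain ⟨hy0, hyx⟩ := mem_simplexBoundary.mp hy
  exact ⟨hy0, fun w hwy hw0 => mem_simplexBoundary.mpr ⟨hw0, hwy.trans_ssubset hyx⟩⟩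

lemma insert_empty_simplexBoundary (hx : x.Nonempty) :
    insert ∅ (simplexBoundary x) = x.ssubsets :=
  insert_erase (mem_ssubsets.mpr (empty_ssubset.mpr hx))

lemma simplexBoundary_singleton (u : α) : simplexBoundary {u} = ∅ := by
  ext y
  simp [mem_simplexBoundary]

lemma vertexSet_simplexBoundary_subset : vertexSet (simplexBoundary x) ⊆ x :=
  Finset.sup_le fun _ hy => (mem_simplexBoundary.mp hy).2.subset

lemma disjoint_vertexSet_simplexBoundary_link :
    Disjoint (vertexSet (simplexBoundary x)) (vertexSet (link G x)) :=
  disjoint_vertexSet_link.symm.mono_left vertexSet_simplexBoundary_subset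

lemma dimC_simplexBoundary (hx : x.Nonempty) : dimC (simplexBoundary x) = x.card - 2 := by
  suffices (simplexBoundary x).sup card = x.card - 1 by
    have := hx.card_pos
    unfold dimC
    omega
  have hsup : (simplexBoundary x).sup card = x.ssubsets.sup card := by
    rw [← insert_empty_simplexBoundary hx, sup_insert, card_empty]
    simp
  rw [hsup]
  apply le_antisymm
  · refine Finset.sup_le fun y hy => ?_
    have := card_lt_card (mem_ssubsets.mp hy)
    omega
  · obtain ⟨u, hu⟩ := hx
    rw [← card_erase_of_mem hu]
    exact le_sup (mem_ssubsets.mpr (erase_ssubset hu))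

lemma one_sub_chi_simplexBoundary (hx : x.Nonempty) :
    1 - chi (simplexBoundary x) = (-1) ^ (x.card - 1) := by
  rw [one_sub_chi (by simp [simplexBoundary]), insert_empty_simplexBoundary hx, ssubsets,
    sum_erase_eq_sub (mem_powerset_self x), sum_powerset_neg_one_pow_card_of_nonempty hx,
    zero_sub]
  obtain ⟨n, hn⟩ := Nat.exists_eq_add_one.mpr hx.card_pos
  rw [hn, Nat.add_sub_cancel, pow_succ]
  ring

lemma link_simplexBoundary (hy : y ∈ simplexBoundary x) :
    link (simplexBoundary x) y = simplexBoundary (x \ y) := by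
  obtain ⟨-, hyx⟩ := mem_simplexBoundary.mp hy
  ext z
  simp only [mem_link, mem_simplexBoundary, ssubset_def, subset_sdiff]
  constructor
  · rintro ⟨⟨hz0, hzx, -⟩, hzy, -, -, hxzy⟩
    refine ⟨hz0, ⟨hzx, hzy⟩, fun h => hxzy ?_⟩
    rw [union_comm]
    exact sdiff_le_iff.mp h
  · rintro ⟨hz0, ⟨hzx, hzy⟩, hxyz⟩
    have hxzy : ¬x ⊆ z ∪ y := fun h => hxyz (sdiff_le_iff.mpr (by rwa [union_comm] at h))
    refine ⟨⟨hz0, hzx, fun h => hxzy (h.trans subset_union_left)⟩, hzy,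
      fun h => hz0 (union_eq_empty.mp h).1, union_subset hzx hyx.1, hxzy⟩

lemma mem_insert_empty_sphereOf (hG : IsComplex G) (hx : x ∈ G) :
    z ∈ insert ∅ (sphereOf G x) ↔ z ∪ x ∈ G ∧ ¬x ⊆ z := by
  rcases eq_or_ne z ∅ with rfl | hz
  · simp [hx, hG.ne_empty hx]
  rw [mem_insert, or_iff_right hz, sphereOf, mem_sdiff, ballOf, starOf, mem_filter, mem_filter]
  constructor
  · rintro ⟨⟨hzG, w, hw, hxw, hzw⟩, hns⟩
    exact ⟨hG.mem_of_subset hw (union_subset hzw hxw) (fun h => hz (union_eq_empty.mp h).1),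
      fun hxz => hns ⟨hzG, hxz⟩⟩
  · rintro ⟨hzx, hxz⟩
    have hzG := hG.mem_of_subset hzx subset_union_left hz
    exact ⟨⟨hzG, z ∪ x, hzx, subset_union_right, subset_union_left⟩, fun h => hxz h.2⟩

lemma eq_of_insert_empty_eq {s t : Finset (Finset α)} (hs : ∅ ∉ s) (ht : ∅ ∉ t)
    (h : insert ∅ s = insert ∅ t) : s = t := by
  rw [← erase_insert hs, h, erase_insert ht]

lemma sphereOf_eq_joinC_simplexBoundary_link (hG : IsComplex G) (hx : x ∈ G) :
    sphereOf G x = joinC (simplexBoundary x) (link G x) := by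
  have hsphere : ∅ ∉ sphereOf G x := fun h =>
    hG.empty_notMem ((sdiff_subset.trans (filter_subset _ _)) h)
  refine eq_of_insert_empty_eq hsphere
    (empty_notMem_joinC (isComplex_simplexBoundary x).empty_notMem
      (fun h => hG.empty_notMem (link_subset h))) ?_
  ext z
  simp only [mem_insert_empty_sphereOf hG hx, mem_insert_empty_joinC,
    insert_empty_simplexBoundary (nonempty_iff_ne_empty.mpr (hG.ne_empty hx)), mem_ssubsets,
    mem_insert_empty_link (mem_insert_of_mem hx)]
  constructor
  · rintro ⟨hzx, hxz⟩
    refine ⟨z ∩ x, ⟨inter_subset_right, fun h => hxz (h.trans inter_subset_left)⟩, z \ x,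
      ⟨?_, disjoint_sdiff_self_left, ?_⟩, by rw [union_comm]; exact sdiff_union_inter z x⟩
    · exact hG.mem_insert_empty_of_subset (mem_insert_of_mem hzx)
        (sdiff_subset.trans subset_union_left)
    · rw [sdiff_union_self_eq_union]
      exact mem_insert_of_mem hzx
  · rintro ⟨s, hsx, t, ⟨-, htx, htxG⟩, rfl⟩
    have hstx : s ∪ t ∪ x = t ∪ x := by
      rw [union_right_comm, union_eq_right.mpr hsx.subset, union_comm]
    refine ⟨hstx ▸ mem_of_mem_insert_of_ne htxG (fun h => hG.ne_empty hx (union_eq_empty.mp h).2),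
      fun hxst => hsx.not_subset fun v hv => ?_⟩
    exact (mem_union.mp (hxst hv)).resolve_right (disjoint_left.mp htx.symm hv)

lemma link_singleton (hG : IsComplex G) {u : α} (hu : {u} ∈ G) : link G {u} = sphereOf G {u} := by
  rw [sphereOf_eq_joinC_simplexBoundary_link hG hu, simplexBoundary_singleton, joinC_empty_left]

lemma link_joinC {A B : Finset (Finset α)} (hA : IsComplex A) (hB : IsComplex B)
    (hd : Disjoint (vertexSet A) (vertexSet B)) {a b : Finset α} (ha : a ∈ insert ∅ A)
    (hb : b ∈ insert ∅ B) :
    link (joinC A B) (a ∪ b) = joinC (link A a) (link B b) := by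
  refine eq_of_insert_empty_eq (fun h => (isComplex_joinC hA hB).empty_notMem (link_subset h))
    (empty_notMem_joinC (fun h => hA.empty_notMem (link_subset h))
      (fun h => hB.empty_notMem (link_subset h))) ?_
  ext z
  rw [mem_insert_empty_link (union_mem_insert_empty_joinC ha hb),
    mem_insert_empty_joinC (A := link A a)]
  constructor
  · rintro ⟨hz, hdisj, hzab⟩
    obtain ⟨s, hs, t, ht, rfl⟩ := mem_insert_empty_joinC.mp hz
    rw [union_union_union_comm, union_mem_insert_empty_joinC_iff hd
      (union_subset (subset_vertexSet hs) (subset_vertexSet ha))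
      (union_subset (subset_vertexSet ht) (subset_vertexSet hb))] at hzab
    rw [disjoint_union_left, disjoint_union_right, disjoint_union_right] at hdisj
    exact ⟨s, (mem_insert_empty_link ha).mpr ⟨hs, hdisj.1.1, hzab.1⟩,
      t, (mem_insert_empty_link hb).mpr ⟨ht, hdisj.2.2, hzab.2⟩, rfl⟩
  · rintro ⟨s, hs, t, ht, rfl⟩
    obtain ⟨hs, hsa, hsaA⟩ := (mem_insert_empty_link ha).mp hs
    obtain ⟨ht, htb, htbB⟩ := (mem_insert_empty_link hb).mp ht
    refine ⟨union_mem_insert_empty_joinC hs ht, ?_, ?_⟩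
    · rw [disjoint_union_left, disjoint_union_right, disjoint_union_right]
      exact ⟨⟨hsa, disjoint_of_mem_insert_empty hd hs hb⟩,
        ⟨(disjoint_of_mem_insert_empty hd ha ht).symm, htb⟩⟩
    · rw [union_union_union_comm]
      exact union_mem_insert_empty_joinC hsaA htbB

end Link

section Sphere

variable {α : Type*} [DecidableEq α] {G : Finset (Finset α)} {q : ℤ}

/-- Unlike `χ G = 1 + (-1) ^ q`, the condition `1 - χ G = (-1) ^ (q + 1)` also holds for the empty
(-1)-sphere, so no case distinction is needed. -/
lemma isDSSphere_iff : IsDSSphere q G ↔ IsComplex G ∧ dimC G = q ∧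
    (∀ x ∈ G, IsDSSphere (q - 1) (sphereOf G x)) ∧ 1 - chi G = (-1) ^ (q + 1).toNat := by
  constructor
  · rintro (_ | ⟨n, G, hC, hdim, hS, hχ⟩)
    · simp [IsComplex, dimC, chi]
    · refine ⟨hC, hdim, hS, ?_⟩
      rw [hχ, show ((n : ℤ) + 1).toNat = n + 1 by omega, pow_succ]
      ring
  · rintro ⟨hC, hdim, hS, hχ⟩
    rcases G.eq_empty_or_nonempty with rfl | ⟨x, hx⟩
    · obtain rfl : q = -1 := by simpa [dimC] using hdim.symm
      exact IsDSSphere.empty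
    · have hq : 0 ≤ q := by
        have := card_le_dimC_add_one (mem_insert_of_mem hx)
        have := (nonempty_iff_ne_empty.mpr (hC.ne_empty hx)).card_pos
        omega
      lift q to ℕ using hq
      refine IsDSSphere.step q G hC hdim hS ?_
      rw [show ((q : ℤ) + 1).toNat = q + 1 by omega, pow_succ] at hχ
      linarith

lemma IsDSSphere.neg_one_le (h : IsDSSphere q G) : -1 ≤ q :=
  (isDSSphere_iff.mp h).2.1 ▸ neg_one_le_dimC

theorem IsDSSphere.isDSSphere_link (hG : IsDSSphere q G) {x : Finset α} (hx : x ∈ insert ∅ G) :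
    IsDSSphere (q - x.card) (link G x) := by
  induction x using Finset.induction_on generalizing q G with
  | empty => simpa using hG
  | insert u y hu ih =>
    obtain ⟨hC, -, hS, -⟩ := isDSSphere_iff.mp hG
    have hx' : insert u y ∈ G := mem_of_mem_insert_of_ne hx (insert_ne_empty u y)
    have hu' : {u} ∈ G := hC.mem_of_subset hx' (singleton_subset_iff.mpr (mem_insert_self u y))
      (singleton_ne_empty u)
    have hlink : IsDSSphere (q - 1) (link G {u}) := link_singleton hC hu' ▸ hS {u} hu'
    have hy : y ∈ insert ∅ (link G {u}) := by
      rw [mem_insert_empty_link (mem_insert_of_mem hu'), union_singleton, disjoint_singleton_right]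
      exact ⟨hC.mem_insert_empty_of_subset hx (subset_insert u y), hu, mem_insert_of_mem hx'⟩
    rw [link_insert hC hu, card_insert_of_notMem hu]
    convert ih hlink hy using 1
    push_cast
    ring

end Sphere

section Induction

variable (α : Type*) [DecidableEq α]

def SimplexBoundariesAreSpheresBelow (d : ℤ) : Prop :=
  ∀ x : Finset α, x.Nonempty → (x.card : ℤ) - 2 < d →
    IsDSSphere ((x.card : ℤ) - 2) (simplexBoundary x)

def JoinsAreSpheresBelow (d : ℤ) : Prop :=
  ∀ (p q : ℤ) (A B : Finset (Finset α)), Disjoint (vertexSet A) (vertexSet B) →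
    IsDSSphere p A → IsDSSphere q B → p + q + 1 < d → IsDSSphere (p + q + 1) (joinC A B)

variable {α} {d : ℤ}

lemma simplexBoundariesAreSpheresBelow_succ (hbdry : SimplexBoundariesAreSpheresBelow α d)
    (hjoin : JoinsAreSpheresBelow α d) : SimplexBoundariesAreSpheresBelow α (d + 1) := by
  intro x hx hlt
  rcases (Int.lt_add_one_iff.mp hlt).lt_or_eq with hlt | rfl
  · exact hbdry x hx hlt
  have hC := isComplex_simplexBoundary x
  refine isDSSphere_iff.mpr ⟨hC, dimC_simplexBoundary hx, fun y hy => ?_, ?_⟩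
  · obtain ⟨hy0, hyx⟩ := mem_simplexBoundary.mp hy
    have hy' : y.Nonempty := nonempty_iff_ne_empty.mpr hy0
    have hxy : (x \ y).Nonempty := sdiff_nonempty.mpr hyx.not_subset
    have hcard : (x \ y).card + y.card = x.card := card_sdiff_add_card_eq_card hyx.subset
    have hbdy := hbdry y hy' (by have := card_lt_card hyx; omega)
    have hbdxy := hbdry (x \ y) hxy (by have := hy'.card_pos; omega)
    have hsphere := hjoin _ _ _ _ disjoint_vertexSet_simplexBoundary_link hbdy
      (link_simplexBoundary hy ▸ hbdxy) (by have := hy'.card_pos; omega)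
    rw [sphereOf_eq_joinC_simplexBoundary_link hC hy]
    convert hsphere using 1
    omega
  · rw [one_sub_chi_simplexBoundary hx]
    congr 1
    omega

lemma joinsAreSpheresBelow_succ (hbdry : SimplexBoundariesAreSpheresBelow α d)
    (hjoin : JoinsAreSpheresBelow α d) : JoinsAreSpheresBelow α (d + 1) := by
  intro p q A B hd hA hB hlt
  rcases (Int.lt_add_one_iff.mp hlt).lt_or_eq with hlt | rfl
  · exact hjoin p q A B hd hA hB hlt
  obtain ⟨hAC, hAdim, -, hAχ⟩ := isDSSphere_iff.mp hA
  obtain ⟨hBC, hBdim, -, hBχ⟩ := isDSSphere_iff.mp hB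
  have hC := isComplex_joinC hAC hBC
  refine isDSSphere_iff.mpr ⟨hC, by rw [dimC_joinC hd, hAdim, hBdim], fun z hz => ?_, ?_⟩
  · obtain ⟨a, ha, b, hb, rfl⟩ := mem_insert_empty_joinC.mp (mem_insert_of_mem hz)
    have hab : (a ∪ b).card = a.card + b.card :=
      card_union_of_disjoint (disjoint_of_mem_insert_empty hd ha hb)
    have hab0 : (a ∪ b).Nonempty := nonempty_iff_ne_empty.mpr (hC.ne_empty hz)
    have hcardA := hAdim ▸ card_le_dimC_add_one ha
    have hcardB := hBdim ▸ card_le_dimC_add_one hb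
    have hlinks := hjoin _ _ _ _ (hd.mono (vertexSet_mono link_subset) (vertexSet_mono link_subset))
      (hA.isDSSphere_link ha) (hB.isDSSphere_link hb) (by have := hab0.card_pos; omega)
    have hbd := hbdry (a ∪ b) hab0 (by omega)
    have hsphere := hjoin _ _ _ _ disjoint_vertexSet_simplexBoundary_link hbd
      (link_joinC hAC hBC hd ha hb ▸ hlinks) (by omega)
    rw [sphereOf_eq_joinC_simplexBoundary_link hC hz]
    convert hsphere using 1
    omega
  · rw [one_sub_chi_joinC hd hAC hBC, hAχ, hBχ, ← pow_add]
    congr 1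
    have := hA.neg_one_le
    have := hB.neg_one_le
    omega

lemma simplexBoundaries_and_joins_areSpheresBelow (n : ℕ) :
    SimplexBoundariesAreSpheresBelow α (n - 1) ∧ JoinsAreSpheresBelow α (n - 1) := by
  induction n with
  | zero =>
    refine ⟨fun x hx hlt => ?_, fun p q A B _ hA hB hlt => ?_⟩
    · have := hx.card_pos
      omega
    · have := hA.neg_one_le
      have := hB.neg_one_le
      omega
  | succ n ih =>
    rw [Nat.cast_succ, add_sub_right_comm]
    exact ⟨simplexBoundariesAreSpheresBelow_succ ih.1 ih.2, joinsAreSpheresBelow_succ ih.1 ih.2⟩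

end Induction

theorem joinC_isDSSphere_general {α : Type*} [DecidableEq α]
    (p q : ℤ) (A B : Finset (Finset α))
    (hd : Disjoint (vertexSet A) (vertexSet B))
    (hA : IsDSSphere p A) (hB : IsDSSphere q B) :
    IsDSSphere (p + q + 1) (joinC A B) :=
  (simplexBoundaries_and_joins_areSpheresBelow (p + q + 3).toNat).2 p q A B hd hA hB (by omega)

/-- The join of a Dehn-Sommerville p-sphere and a Dehn-Sommerville
q-sphere on disjoint vertex sets is a Dehn-Sommerville (p+q+1)-sphere. -/
theorem joinC_isDSSphere {α : Type*} [DecidableEq α]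
    (p q : ℤ) (hp : -1 ≤ p) (hq : -1 ≤ q) (A B : Finset (Finset α))
    (hd : Disjoint (vertexSet A) (vertexSet B))
    (hA : IsDSSphere p A) (hB : IsDSSphere q B) :
    IsDSSphere (p + q + 1) (joinC A B) :=
  joinC_isDSSphere_general p q A B hd hA hB
end

section
/- Let G be a Dehn-Sommerville q-sphere and let k be an integer with 0 ≤ k < q and k + q even. Then X_{k,q}(G) = 0. -/
open Finset

/-- f_k(G): the number of k-dimensional simplices of G. -/
def fCount {α : Type*} (G : Finset (Finset α)) (k : ℕ) : ℕ :=
  (G.filter fun x => x.card = k + 1).card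

/-- The j-th entry of the Dehn-Sommerville valuation vector X_{k,q}. -/
def XvalCoeff (k q j : ℕ) : ℤ :=
  if j < k then 0
  else if j = k then (-1 : ℤ) ^ (k + q) - 1
  else (-1 : ℤ) ^ (j + q) * ((j + 1).choose (k + 1))

/-- The Dehn-Sommerville valuation X_{k,q}(H) = Σ_{j=0}^{q} X_{k,q,j} f_j(H). -/
def Xval {α : Type*} (k q : ℕ) (H : Finset (Finset α)) : ℤ :=
  ∑ j ∈ Finset.range (q + 1), XvalCoeff k q j * (fCount H j : ℤ)


/-!
Double counting the pairs (vertex v, simplex x ∋ v) gives Σ_v f_j(S(v)) = (j + 2) f_{j+1}(G), so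
summing an f-vector valuation over the unit spheres of the vertices gives a valuation of G with
shifted coefficients. By (k + 2) C(j + 2, k + 2) = (j + 2) C(j + 1, k + 1), the sum of
X_{k,q-1}(S(v)) over the vertices is (k + 2) X_{k+1,q}(G), and for q even the sum of χ(S(v)) is
−X_{0,q}(G). On a Dehn-Sommerville q-sphere with q even the unit spheres are Dehn-Sommerville
spheres of odd dimension, so χ(S(v)) = 0; this gives X_{0,q}(G) = 0, and induction on k
(lowering q with k, so that k + q stays even) gives the rest.
-/

theorem XvalCoeff_zero_zero {q : ℕ} (hq : Even q) : XvalCoeff 0 q 0 = 0 := by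
  simp [XvalCoeff, hq.neg_one_pow]

theorem XvalCoeff_zero_succ {q : ℕ} (hq : Even q) (i : ℕ) :
    -XvalCoeff 0 q (i + 1) = (-1) ^ i * (i + 2) := by
  rw [XvalCoeff, if_neg (by omega), if_neg (by omega), Nat.choose_one_right, pow_add,
    hq.neg_one_pow, pow_succ]
  push_cast
  ring

theorem XvalCoeff_succ_zero (k q : ℕ) : XvalCoeff (k + 1) q 0 = 0 :=
  if_pos k.succ_pos

theorem XvalCoeff_succ_succ {q : ℕ} (hq : 1 ≤ q) (k i : ℕ) :
    (k + 2) * XvalCoeff (k + 1) q (i + 1) = XvalCoeff k (q - 1) i * (i + 2) := by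
  have hsign : ∀ n, (-1 : ℤ) ^ (n + 1 + q) = (-1) ^ (n + (q - 1)) := fun n => by
    rw [show n + 1 + q = n + (q - 1) + 2 by omega, pow_add]
    norm_num
  simp only [XvalCoeff, add_lt_add_iff_right, add_left_inj, hsign]
  split_ifs with hik hik'
  · ring
  · subst hik'
    ring
  · have habsorb : ((i + 2 : ℕ) : ℤ) * (i + 1).choose (k + 1)
        = (i + 2).choose (k + 2) * (k + 2 : ℕ) :=
      mod_cast Nat.add_one_mul_choose_eq (i + 1) (k + 1)
    push_cast at habsorb
    linear_combination (-1 : ℤ) ^ (i + (q - 1)) * habsorb.symm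

section

variable {α : Type*}

theorem IsComplex.one_le_card {G : Finset (Finset α)} (hC : IsComplex G) {x : Finset α}
    (hx : x ∈ G) : 1 ≤ x.card :=
  card_pos.mpr (nonempty_iff_ne_empty.mpr (hC x hx).1)

theorem chi_eq_sum_fCount {H : Finset (Finset α)} (hC : IsComplex H) {N : ℕ}
    (hN : H.sup card ≤ N) :
    chi H = ∑ j ∈ range N, (-1 : ℤ) ^ j * fCount H j := by
  have hmaps : ∀ z ∈ H, z.card - 1 ∈ range N := fun z hz => by
    have := hC.one_le_card hz
    have := le_sup (f := card) hz
    exact mem_range.mpr (by omega)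
  rw [chi, ← sum_fiberwise_of_maps_to hmaps]
  refine sum_congr rfl fun j _ => ?_
  have hfiber : {z ∈ H | z.card - 1 = j} = {z ∈ H | z.card = j + 1} :=
    filter_congr fun z hz => by have := hC.one_le_card hz; omega
  rw [hfiber, sum_congr rfl fun z hz => by rw [(mem_filter.mp hz).2, Nat.add_sub_cancel],
    sum_const, nsmul_eq_mul, mul_comm]
  rfl

variable [DecidableEq α]

theorem isDSSphere_natCast_iff {q : ℕ} {G : Finset (Finset α)} :
    IsDSSphere (q : ℤ) G ↔ IsComplex G ∧ dimC G = q ∧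
      (∀ x ∈ G, IsDSSphere ((q : ℤ) - 1) (sphereOf G x)) ∧ chi G = 1 + (-1) ^ q := by
  refine ⟨fun h => ?_, fun ⟨hC, hdim, hS, hχ⟩ => .step q G hC hdim hS hχ⟩
  generalize hn : (q : ℤ) = n at h
  cases h with
  | empty => omega
  | step q' _ hC hdim hS hχ =>
    obtain rfl : q' = q := by omega
    exact ⟨hC, hdim, hS, hχ⟩

theorem IsDSSphere.chi_eq_zero {q : ℕ} {G : Finset (Finset α)} (hG : IsDSSphere (q : ℤ) G)
    (hq : Odd q) : chi G = 0 := by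
  rw [(isDSSphere_natCast_iff.mp hG).2.2.2, hq.neg_one_pow, add_neg_cancel]

theorem IsComplex.singleton_mem {G : Finset (Finset α)} (hC : IsComplex G) {v : α}
    (hv : v ∈ vertexSet G) : {v} ∈ G := by
  obtain ⟨x, hx, hvx⟩ := Finset.mem_sup.mp hv
  exact (hC x hx).2 {v} (singleton_subset_iff.mpr hvx) (singleton_ne_empty v)

theorem IsDSSphere.sphereOf_singleton {q : ℕ} {G : Finset (Finset α)}
    (hG : IsDSSphere (q : ℤ) G) (hq : 1 ≤ q) {v : α} (hv : v ∈ vertexSet G) :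
    IsDSSphere ((q - 1 : ℕ) : ℤ) (sphereOf G {v}) := by
  obtain ⟨hC, -, hS, -⟩ := isDSSphere_natCast_iff.mp hG
  rw [Nat.cast_sub hq, Nat.cast_one]
  exact hS {v} (hC.singleton_mem hv)

theorem IsComplex.isComplex_sphereOf {G : Finset (Finset α)} (hC : IsComplex G) (x : Finset α) :
    IsComplex (sphereOf G x) := by
  intro z hz
  simp only [sphereOf, ballOf, starOf, mem_sdiff, mem_filter] at hz ⊢
  obtain ⟨⟨hz, y, hy, hxy, hzy⟩, hxz⟩ := hz
  exact ⟨(hC z hz).1, fun w hwz hw =>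
    ⟨⟨(hC z hz).2 w hwz hw, y, hy, hxy, hwz.trans hzy⟩, fun h => hxz ⟨hz, h.2.trans hwz⟩⟩⟩

theorem IsComplex.mem_sphereOf_singleton_iff {G : Finset (Finset α)} (hC : IsComplex G)
    {v : α} {z : Finset α} :
    z ∈ sphereOf G {v} ↔ z ∈ G ∧ v ∉ z ∧ insert v z ∈ G := by
  simp only [sphereOf, ballOf, starOf, mem_sdiff, mem_filter, singleton_subset_iff]
  constructor
  · rintro ⟨⟨hz, y, hy, hvy, hzy⟩, hvz⟩
    exact ⟨hz, fun hv => hvz ⟨hz, hv⟩,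
      (hC y hy).2 _ (insert_subset hvy hzy) (insert_ne_empty v z)⟩
  · rintro ⟨hz, hvz, hins⟩
    exact ⟨⟨hz, insert v z, hins, mem_insert_self v z, subset_insert v z⟩, fun h => hvz h.2⟩

theorem IsComplex.fCount_sphereOf_singleton {G : Finset (Finset α)} (hC : IsComplex G)
    (v : α) (j : ℕ) :
    fCount (sphereOf G {v}) j = #{x ∈ G | x.card = j + 2 ∧ v ∈ x} := by
  refine card_bij' (fun z _ => insert v z) (fun x _ => x.erase v) ?_ ?_ ?_ ?_
  · intro z hz
    simp only [mem_filter, hC.mem_sphereOf_singleton_iff] at hz ⊢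
    obtain ⟨⟨-, hvz, hins⟩, hcard⟩ := hz
    exact ⟨hins, by rw [card_insert_of_notMem hvz, hcard], mem_insert_self v z⟩
  · intro x hx
    simp only [mem_filter] at hx
    obtain ⟨hx, hcard, hvx⟩ := hx
    have hcard' : (x.erase v).card = j + 1 := by rw [card_erase_of_mem hvx, hcard]; rfl
    have hne : x.erase v ≠ ∅ := nonempty_iff_ne_empty.mp (card_pos.mp (by omega))
    simp only [mem_filter, hC.mem_sphereOf_singleton_iff, insert_erase hvx]
    exact ⟨⟨(hC x hx).2 _ (erase_subset v x) hne, notMem_erase v x, hx⟩, hcard'⟩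
  · intro z hz
    simp only [mem_filter, hC.mem_sphereOf_singleton_iff] at hz
    exact erase_insert hz.1.2.1
  · intro x hx
    exact insert_erase (mem_filter.mp hx).2.2

theorem IsComplex.sup_card_sphereOf_singleton_le {G : Finset (Finset α)} (hC : IsComplex G)
    {n : ℕ} (hG : G.sup card ≤ n + 1) (v : α) : (sphereOf G {v}).sup card ≤ n :=
  Finset.sup_le fun z hz => by
    obtain ⟨-, hvz, hins⟩ := hC.mem_sphereOf_singleton_iff.mp hz
    have := le_sup (f := card) hins
    rw [card_insert_of_notMem hvz] at this
    omega

theorem IsComplex.sum_fCount_sphereOf_singleton {G : Finset (Finset α)} (hC : IsComplex G)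
    (j : ℕ) :
    ∑ v ∈ vertexSet G, fCount (sphereOf G {v}) j = (j + 2) * fCount G (j + 1) := by
  have hvert : ∀ x ∈ G, {v ∈ vertexSet G | v ∈ x} = x := fun x hx => by
    ext v
    simp only [mem_filter, vertexSet, mem_sup, id]
    exact ⟨And.right, fun hv => ⟨⟨x, hx, hv⟩, hv⟩⟩
  calc ∑ v ∈ vertexSet G, fCount (sphereOf G {v}) j
      = ∑ v ∈ vertexSet G, #{x ∈ {x ∈ G | x.card = j + 2} | v ∈ x} := by
        simp only [hC.fCount_sphereOf_singleton, filter_filter]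
    _ = ∑ x ∈ {x ∈ G | x.card = j + 2}, #{v ∈ vertexSet G | v ∈ x} :=
        sum_card_bipartiteAbove_eq_sum_card_bipartiteBelow _
    _ = ∑ _x ∈ {x ∈ G | x.card = j + 2}, (j + 2) := by
        refine sum_congr rfl fun x hx => ?_
        rw [mem_filter] at hx
        rw [hvert x hx.1, hx.2]
    _ = (j + 2) * fCount G (j + 1) := by
        rw [sum_const, smul_eq_mul, mul_comm]
        rfl

theorem IsComplex.mul_sum_fCount_eq_sum_sphereOf_singleton {G : Finset (Finset α)}
    (hC : IsComplex G) (N : ℕ) {c d : ℕ → ℤ} {m : ℤ} (hd : d 0 = 0)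
    (hcd : ∀ i, m * d (i + 1) = c i * (i + 2)) :
    m * ∑ j ∈ range (N + 1), d j * fCount G j
      = ∑ v ∈ vertexSet G, ∑ i ∈ range N, c i * fCount (sphereOf G {v}) i := by
  rw [sum_range_succ', hd, zero_mul, add_zero, mul_sum, sum_comm]
  refine sum_congr rfl fun i _ => ?_
  have hcount := congrArg (Nat.cast : ℕ → ℤ) (hC.sum_fCount_sphereOf_singleton i)
  push_cast at hcount
  rw [← mul_sum, hcount, ← mul_assoc, hcd]
  ring

theorem IsComplex.Xval_zero_eq_neg_sum_chi {G : Finset (Finset α)} (hC : IsComplex G) {q : ℕ}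
    (hdim : G.sup card ≤ q + 1) (hq : Even q) :
    Xval 0 q G = -∑ v ∈ vertexSet G, chi (sphereOf G {v}) := by
  have hsphere := hC.mul_sum_fCount_eq_sum_sphereOf_singleton q (m := -1)
    (XvalCoeff_zero_zero hq) (fun i => by rw [neg_one_mul, XvalCoeff_zero_succ hq])
  rw [← neg_eq_iff_eq_neg, ← neg_one_mul, Xval, hsphere]
  exact sum_congr rfl fun v _ =>
    (chi_eq_sum_fCount (hC.isComplex_sphereOf {v}) (hC.sup_card_sphereOf_singleton_le hdim v)).symm

theorem IsComplex.mul_Xval_succ_eq_sum_sphereOf_singleton {G : Finset (Finset α)}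
    (hC : IsComplex G) {q : ℕ} (hq : 1 ≤ q) (k : ℕ) :
    (k + 2) * Xval (k + 1) q G = ∑ v ∈ vertexSet G, Xval k (q - 1) (sphereOf G {v}) := by
  have hsphere := hC.mul_sum_fCount_eq_sum_sphereOf_singleton q (XvalCoeff_succ_zero k q)
    (XvalCoeff_succ_succ hq k)
  simp only [Xval, Nat.sub_add_cancel hq]
  exact hsphere

end

/-- the Dehn-Sommerville valuations X_{k,q} with 0 ≤ k < q and
k + q even vanish on every Dehn-Sommerville q-sphere. -/
theorem Xval_eq_zero_of_DSSphere {α : Type*} [DecidableEq α]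
    (G : Finset (Finset α)) (q k : ℕ) (hk : k < q) (he : Even (k + q))
    (hG : IsDSSphere (q : ℤ) G) :
    Xval k q G = 0 := by
  induction k generalizing q G with
  | zero =>
    obtain ⟨hC, hdim, -, -⟩ := isDSSphere_natCast_iff.mp hG
    have hq : Even q := by simpa using he
    have hsup : G.sup card ≤ q + 1 := by unfold dimC at hdim; omega
    rw [hC.Xval_zero_eq_neg_sum_chi hsup hq, neg_eq_zero]
    exact sum_eq_zero fun v hv =>
      (hG.sphereOf_singleton hk hv).chi_eq_zero (Nat.Even.sub_odd hk hq odd_one)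
  | succ k ih =>
    have hsphere : ∀ v ∈ vertexSet G, Xval k (q - 1) (sphereOf G {v}) = 0 := fun v hv =>
      have he' : Even (k + (q - 1)) := by obtain ⟨m, hm⟩ := he; exact ⟨m - 1, by omega⟩
      ih _ _ (by omega) he' (hG.sphereOf_singleton (by omega) hv)
    have hsum := (isDSSphere_natCast_iff.mp hG).1.mul_Xval_succ_eq_sum_sphereOf_singleton
      (q := q) (by omega) k
    rw [sum_eq_zero hsphere] at hsum
    exact (mul_eq_zero.mp hsum).resolve_left (by positivity)
end
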